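/- arXiv:2002.03993 — 3 statements merged into one kernel-verified Lean document; each statement's English description precedes it below -/
import Mathlib

section
/- If f₁, f₂ : [0,∞) → [0,1] are continuous functions with f₁(x) < f₂(x) for every x ≥ 0, then T(f₁)(x) < T(f₂)(x) for every x ≥ 0. -/
/-!
The tail integrals `∫_y^∞ e^{-z} z^k / k! · f(z)^k dz` are nondecreasing in `f`, and strictly
increasing as soon as `k ≥ 1`, because the Erlang density `e^{-z} z^k / k!` is positive on
`(0, ∞)`. Every term of `T(f)(x)` is an average over `y ∈ (0, x]` (or the value at `y = 0`) of
such a tail plus a term independent of `f`, weighted by `P(k + 1) ≥ 0`. Since `P(0) = 0` and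
`P(1) < 1`, some `P(k + 1)` with `k ≥ 1` is positive, and the strict increase of that term
survives the averaging and the summation.
-/

open MeasureTheory Real Set Filter

noncomputable def Toper (P : ℕ → ℝ) (f : ℝ → ℝ) : ℝ → ℝ := fun x =>
  if x = 0 then
    ∑' k : ℕ, P (k + 1) * ∫ z in Ioi (0 : ℝ),
      Real.exp (-z) * z ^ k / (Nat.factorial k : ℝ) * f z ^ k
  else
    (1 / x) * ∑' k : ℕ, P (k + 1) *
      ∫ y in Ioc (0 : ℝ) x,
        ((∫ z in Ioc (0 : ℝ) y, Real.exp (-z) * z ^ k / (Nat.factorial k : ℝ)) +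
          ∫ z in Ioi y, Real.exp (-z) * z ^ k / (Nat.factorial k : ℝ) * f z ^ k)

theorem setIntegral_lt_setIntegral_of_forall_lt {X : Type*} [MeasurableSpace X]
    {μ : Measure X} {s : Set X} {f g : X → ℝ} (hs : MeasurableSet s) (hμs : μ s ≠ 0)
    (hf : IntegrableOn f s μ) (hg : IntegrableOn g s μ) (hlt : ∀ x ∈ s, f x < g x) :
    ∫ x in s, f x ∂μ < ∫ x in s, g x ∂μ := by
  have hpos : ∀ x ∈ s, 0 < g x - f x := fun x hx => sub_pos.2 (hlt x hx)
  have hsupp : (Function.support fun x => g x - f x) ∩ s = s :=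
    inter_eq_right.2 fun x hx => (hpos x hx).ne'
  rw [← sub_pos, ← integral_sub hg hf, setIntegral_pos_iff_support_of_nonneg_ae
    (ae_restrict_of_forall_mem hs fun x hx => (hpos x hx).le) (hg.sub hf), hsupp]
  exact pos_iff_ne_zero.2 hμs

theorem tsum_mul_lt_tsum_mul {ι : Type*} {p a b : ι → ℝ} {C : ℝ} (hp : Summable p)
    (hp0 : ∀ k, 0 ≤ p k) (ha : ∀ k, 0 ≤ a k) (hab : ∀ k, a k ≤ b k) (hbC : ∀ k, b k ≤ C)
    {i : ι} (hpi : 0 < p i) (hi : a i < b i) :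
    ∑' k, p k * a k < ∑' k, p k * b k := by
  have hle : ∀ k, p k * a k ≤ p k * b k := fun k => mul_le_mul_of_nonneg_left (hab k) (hp0 k)
  have hsb : Summable fun k => p k * b k :=
    (hp.mul_right C).of_nonneg_of_le (fun k => (mul_nonneg (hp0 k) (ha k)).trans (hle k))
      fun k => mul_le_mul_of_nonneg_left (hbC k) (hp0 k)
  exact (hsb.of_nonneg_of_le (fun k => mul_nonneg (hp0 k) (ha k)) hle).tsum_lt_tsum hle
    (mul_lt_mul_of_pos_left hi hpi) hsb

theorem exists_pos_add_two {P : ℕ → ℝ} (hP0 : P 0 = 0) (hPnonneg : ∀ k, 0 ≤ P k)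
    (hPsum : ∑' k, P k = 1) (hP1 : P 1 < 1) : ∃ m, 0 < P (m + 2) := by
  by_contra! h
  have hsum : ∑' k, P k = ∑ k ∈ Finset.range 2, P k := by
    refine tsum_eq_sum fun k hk => le_antisymm ?_ (hPnonneg k)
    obtain ⟨m, rfl⟩ := Nat.exists_eq_add_of_le' (not_lt.1 (Finset.mem_range.not.1 hk))
    exact h m
  simp only [Finset.sum_range_succ, Finset.sum_range_zero, hP0, hPsum] at hsum
  linarith

noncomputable def erlangDensity (k : ℕ) (z : ℝ) : ℝ :=
  Real.exp (-z) * z ^ k / (Nat.factorial k : ℝ)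

noncomputable def erlangCDF (k : ℕ) (y : ℝ) : ℝ :=
  ∫ z in Ioc 0 y, erlangDensity k z

noncomputable def erlangTail (k : ℕ) (h : ℝ → ℝ) (y : ℝ) : ℝ :=
  ∫ z in Ioi y, erlangDensity k z * h z

noncomputable def erlangProfile (k : ℕ) (h : ℝ → ℝ) (y : ℝ) : ℝ :=
  erlangCDF k y + erlangTail k h y

theorem Toper_zero (P : ℕ → ℝ) (f : ℝ → ℝ) :
    Toper P f 0 = ∑' k, P (k + 1) * erlangTail k (fun z => f z ^ k) 0 :=
  if_pos rfl

theorem Toper_of_ne_zero (P : ℕ → ℝ) (f : ℝ → ℝ) {x : ℝ} (hx : x ≠ 0) :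
    Toper P f x =
      1 / x * ∑' k, P (k + 1) * ∫ y in Ioc 0 x, erlangProfile k (fun z => f z ^ k) y :=
  if_neg hx

/-- What is needed of `f ^ k` for the terms of `T(f)` to be integrable and monotone in `f`. -/
structure IsAdmissibleWeight (h : ℝ → ℝ) : Prop where
  aestronglyMeasurable : AEStronglyMeasurable h (volume.restrict (Ioi 0))
  mem_Icc : ∀ z, 0 < z → h z ∈ Icc (0 : ℝ) 1

theorem isAdmissibleWeight_pow {f : ℝ → ℝ} (hc : ContinuousOn f (Ici 0))
    (hf : ∀ x, 0 ≤ x → f x ∈ Icc (0 : ℝ) 1) (k : ℕ) :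
    IsAdmissibleWeight fun z => f z ^ k where
  aestronglyMeasurable :=
    ((hc.mono Ioi_subset_Ici_self).aestronglyMeasurable measurableSet_Ioi).pow k
  mem_Icc z hz := ⟨pow_nonneg (hf z hz.le).1 k, pow_le_one₀ (hf z hz.le).1 (hf z hz.le).2⟩

section Erlang

variable (k : ℕ)

theorem erlangDensity_pos {z : ℝ} (hz : 0 < z) : 0 < erlangDensity k z := by
  unfold erlangDensity
  positivity

theorem integral_Ioi_exp_neg_mul_pow :
    ∫ z in Ioi (0 : ℝ), Real.exp (-z) * z ^ k = Nat.factorial k := by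
  rw [← Real.Gamma_nat_eq_factorial, Real.Gamma_eq_integral (by positivity)]
  refine setIntegral_congr_fun measurableSet_Ioi fun z _ => ?_
  rw [add_sub_cancel_right, Real.rpow_natCast]

theorem integrableOn_erlangDensity : IntegrableOn (erlangDensity k) (Ioi 0) := by
  refine .div_const ((Real.GammaIntegral_convergent (s := k + 1) (by positivity)).congr_fun
    (fun z _ => ?_) measurableSet_Ioi) _
  simp only [add_sub_cancel_right, Real.rpow_natCast]

theorem integral_erlangDensity : ∫ z in Ioi 0, erlangDensity k z = 1 := by
  simp only [erlangDensity]
  rw [integral_div, integral_Ioi_exp_neg_mul_pow, div_self (by positivity)]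

theorem erlangCDF_nonneg (y : ℝ) : 0 ≤ erlangCDF k y :=
  setIntegral_nonneg measurableSet_Ioc fun _ hz => (erlangDensity_pos k hz.1).le

theorem monotone_erlangCDF : Monotone (erlangCDF k) := fun _ _ hy =>
  setIntegral_mono_set ((integrableOn_erlangDensity k).mono_set Ioc_subset_Ioi_self)
    (ae_restrict_of_forall_mem measurableSet_Ioc fun _ hz => (erlangDensity_pos k hz.1).le)
    (Ioc_subset_Ioc_right hy).eventuallyLE

variable {k} {h h₁ h₂ : ℝ → ℝ} {y : ℝ}

theorem IsAdmissibleWeight.integrableOn_erlangDensity_mul (hh : IsAdmissibleWeight h) :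
    IntegrableOn (fun z => erlangDensity k z * h z) (Ioi 0) :=
  (integrableOn_erlangDensity k).mul_bdd hh.aestronglyMeasurable <|
    ae_restrict_of_forall_mem measurableSet_Ioi fun z hz => by
      rw [Real.norm_of_nonneg (hh.mem_Icc z hz).1]
      exact (hh.mem_Icc z hz).2

theorem IsAdmissibleWeight.erlangDensity_mul_nonneg (hh : IsAdmissibleWeight h) {z : ℝ}
    (hz : 0 < z) : 0 ≤ erlangDensity k z * h z :=
  mul_nonneg (erlangDensity_pos k hz).le (hh.mem_Icc z hz).1

theorem erlangTail_nonneg (hh : IsAdmissibleWeight h) (hy : 0 ≤ y) : 0 ≤ erlangTail k h y :=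
  setIntegral_nonneg measurableSet_Ioi fun _ hz => hh.erlangDensity_mul_nonneg (hy.trans_lt hz)

theorem erlangTail_mono (hh₁ : IsAdmissibleWeight h₁) (hh₂ : IsAdmissibleWeight h₂)
    (hle : ∀ z, 0 < z → h₁ z ≤ h₂ z) (hy : 0 ≤ y) : erlangTail k h₁ y ≤ erlangTail k h₂ y :=
  setIntegral_mono_on (hh₁.integrableOn_erlangDensity_mul.mono_set (Ioi_subset_Ioi hy))
    (hh₂.integrableOn_erlangDensity_mul.mono_set (Ioi_subset_Ioi hy)) measurableSet_Ioi
    fun z hz => mul_le_mul_of_nonneg_left (hle z (hy.trans_lt hz))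
      (erlangDensity_pos k (hy.trans_lt hz)).le

theorem erlangTail_lt (hh₁ : IsAdmissibleWeight h₁) (hh₂ : IsAdmissibleWeight h₂)
    (hlt : ∀ z, 0 < z → h₁ z < h₂ z) (hy : 0 ≤ y) : erlangTail k h₁ y < erlangTail k h₂ y :=
  setIntegral_lt_setIntegral_of_forall_lt measurableSet_Ioi (by simp)
    (hh₁.integrableOn_erlangDensity_mul.mono_set (Ioi_subset_Ioi hy))
    (hh₂.integrableOn_erlangDensity_mul.mono_set (Ioi_subset_Ioi hy)) fun z hz =>
      mul_lt_mul_of_pos_left (hlt z (hy.trans_lt hz)) (erlangDensity_pos k (hy.trans_lt hz))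

theorem antitoneOn_erlangTail (hh : IsAdmissibleWeight h) :
    AntitoneOn (erlangTail k h) (Ici 0) :=
  fun _ hy₁ _ _ hy =>
    setIntegral_mono_set (hh.integrableOn_erlangDensity_mul.mono_set (Ioi_subset_Ioi hy₁))
      (ae_restrict_of_forall_mem measurableSet_Ioi fun _ hz =>
        hh.erlangDensity_mul_nonneg (hy₁.trans_lt hz))
      (Ioi_subset_Ioi hy).eventuallyLE

theorem erlangProfile_nonneg (hh : IsAdmissibleWeight h) (hy : 0 ≤ y) :
    0 ≤ erlangProfile k h y :=
  add_nonneg (erlangCDF_nonneg k y) (erlangTail_nonneg hh hy)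

theorem erlangProfile_le_one (hh : IsAdmissibleWeight h) (hy : 0 ≤ y) :
    erlangProfile k h y ≤ 1 := by
  have hone : erlangCDF k y + erlangTail k 1 y = 1 := by
    simp only [erlangCDF, erlangTail, Pi.one_apply, mul_one]
    rw [← setIntegral_union Ioc_disjoint_Ioi_same measurableSet_Ioi
      ((integrableOn_erlangDensity k).mono_set Ioc_subset_Ioi_self)
      ((integrableOn_erlangDensity k).mono_set (Ioi_subset_Ioi hy)),
      Ioc_union_Ioi_eq_Ioi hy, integral_erlangDensity]
  have htail : erlangTail k h y ≤ erlangTail k 1 y :=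
    erlangTail_mono hh ⟨aestronglyMeasurable_const, fun _ _ => ⟨zero_le_one, le_rfl⟩⟩
      (fun z hz => (hh.mem_Icc z hz).2) hy
  rw [erlangProfile]
  linarith

theorem erlangTail_le_one (hh : IsAdmissibleWeight h) (hy : 0 ≤ y) : erlangTail k h y ≤ 1 :=
  (le_add_of_nonneg_left (erlangCDF_nonneg k y)).trans (erlangProfile_le_one hh hy)

theorem integrableOn_erlangProfile (hh : IsAdmissibleWeight h) (x : ℝ) :
    IntegrableOn (erlangProfile k h) (Ioc 0 x) :=
  (((monotone_erlangCDF k).monotoneOn _).integrableOn_isCompact isCompact_Icc |>.add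
    ((antitoneOn_erlangTail hh).mono Icc_subset_Ici_self |>.integrableOn_isCompact
      isCompact_Icc)).mono_set Ioc_subset_Icc_self

theorem setIntegral_erlangProfile_nonneg (hh : IsAdmissibleWeight h) (x : ℝ) :
    0 ≤ ∫ y in Ioc 0 x, erlangProfile k h y :=
  setIntegral_nonneg measurableSet_Ioc fun _ hy => erlangProfile_nonneg hh hy.1.le

theorem setIntegral_erlangProfile_le (hh : IsAdmissibleWeight h) {x : ℝ} (hx : 0 ≤ x) :
    ∫ y in Ioc 0 x, erlangProfile k h y ≤ x := by
  calc ∫ y in Ioc 0 x, erlangProfile k h y ≤ ∫ _ in Ioc 0 x, (1 : ℝ) :=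
        setIntegral_mono_on (integrableOn_erlangProfile hh x)
          (integrableOn_const measure_Ioc_lt_top.ne) measurableSet_Ioc
          fun y hy => erlangProfile_le_one hh hy.1.le
    _ = x := by simp [hx]

theorem setIntegral_erlangProfile_mono (hh₁ : IsAdmissibleWeight h₁)
    (hh₂ : IsAdmissibleWeight h₂) (hle : ∀ z, 0 < z → h₁ z ≤ h₂ z) (x : ℝ) :
    ∫ y in Ioc 0 x, erlangProfile k h₁ y ≤ ∫ y in Ioc 0 x, erlangProfile k h₂ y :=
  setIntegral_mono_on (integrableOn_erlangProfile hh₁ x) (integrableOn_erlangProfile hh₂ x)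
    measurableSet_Ioc fun _ hy => add_le_add_right (erlangTail_mono hh₁ hh₂ hle hy.1.le) _

theorem setIntegral_erlangProfile_lt (hh₁ : IsAdmissibleWeight h₁)
    (hh₂ : IsAdmissibleWeight h₂) (hlt : ∀ z, 0 < z → h₁ z < h₂ z) {x : ℝ} (hx : 0 < x) :
    ∫ y in Ioc 0 x, erlangProfile k h₁ y < ∫ y in Ioc 0 x, erlangProfile k h₂ y :=
  setIntegral_lt_setIntegral_of_forall_lt measurableSet_Ioc (by simpa using hx)
    (integrableOn_erlangProfile hh₁ x) (integrableOn_erlangProfile hh₂ x) fun _ hy =>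
      add_lt_add_right (erlangTail_lt hh₁ hh₂ hlt hy.1.le) _

end Erlang

theorem stmt_2_general (P : ℕ → ℝ)
    (hP0 : P 0 = 0) (hPnonneg : ∀ k, 0 ≤ P k) (hPsum : ∑' k, P k = 1)
    (hP1 : P 1 < 1)
    (f₁ f₂ : ℝ → ℝ)
    (hc₁ : ContinuousOn f₁ (Ici 0)) (hc₂ : ContinuousOn f₂ (Ici 0))
    (h₁ : ∀ x, 0 ≤ x → f₁ x ∈ Icc (0 : ℝ) 1) (h₂ : ∀ x, 0 ≤ x → f₂ x ∈ Icc (0 : ℝ) 1)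
    (hlt : ∀ x, 0 ≤ x → f₁ x < f₂ x) :
    ∀ x, 0 ≤ x → Toper P f₁ x < Toper P f₂ x := by
  have hsP : Summable fun k => P (k + 1) := (summable_nat_add_iff 1).2 <| by
    by_contra h
    simp [tsum_eq_zero_of_not_summable h] at hPsum
  obtain ⟨m, hPm⟩ := exists_pos_add_two hP0 hPnonneg hPsum hP1
  have hw₁ := isAdmissibleWeight_pow hc₁ h₁
  have hw₂ := isAdmissibleWeight_pow hc₂ h₂
  have hle k z (hz : 0 < z) : f₁ z ^ k ≤ f₂ z ^ k :=
    pow_le_pow_left₀ (h₁ z hz.le).1 (hlt z hz.le).le k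
  have hlt_pow z (hz : 0 < z) : f₁ z ^ (m + 1) < f₂ z ^ (m + 1) :=
    pow_lt_pow_left₀ (hlt z hz.le) (h₁ z hz.le).1 m.succ_ne_zero
  intro x hx
  rcases hx.eq_or_lt with rfl | hx
  · rw [Toper_zero, Toper_zero]
    exact tsum_mul_lt_tsum_mul hsP (fun _ => hPnonneg _)
      (fun k => erlangTail_nonneg (hw₁ k) le_rfl)
      (fun k => erlangTail_mono (hw₁ k) (hw₂ k) (hle k) le_rfl)
      (fun k => erlangTail_le_one (hw₂ k) le_rfl) hPm
      (erlangTail_lt (hw₁ _) (hw₂ _) hlt_pow le_rfl)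
  · rw [Toper_of_ne_zero _ _ hx.ne', Toper_of_ne_zero _ _ hx.ne']
    refine mul_lt_mul_of_pos_left ?_ (by positivity)
    exact tsum_mul_lt_tsum_mul hsP (fun _ => hPnonneg _)
      (fun k => setIntegral_erlangProfile_nonneg (hw₁ k) x)
      (fun k => setIntegral_erlangProfile_mono (hw₁ k) (hw₂ k) (hle k) x)
      (fun k => setIntegral_erlangProfile_le (hw₂ k) hx.le) hPm
      (setIntegral_erlangProfile_lt (hw₁ _) (hw₂ _) hlt_pow hx)

theorem stmt_2 (P : ℕ → ℝ)
    (hP0 : P 0 = 0) (hPnonneg : ∀ k, 0 ≤ P k) (hPsum : ∑' k, P k = 1)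
    (hPmean : Summable fun k : ℕ => (k : ℝ) * P k) (hP1 : P 1 < 1)
    (f₁ f₂ : ℝ → ℝ)
    (hc₁ : ContinuousOn f₁ (Ici 0)) (hc₂ : ContinuousOn f₂ (Ici 0))
    (h₁ : ∀ x, 0 ≤ x → f₁ x ∈ Icc (0 : ℝ) 1) (h₂ : ∀ x, 0 ≤ x → f₂ x ∈ Icc (0 : ℝ) 1)
    (hlt : ∀ x, 0 ≤ x → f₁ x < f₂ x) :
    ∀ x, 0 ≤ x → Toper P f₁ x < Toper P f₂ x :=
  stmt_2_general P hP0 hPnonneg hPsum hP1 f₁ f₂ hc₁ hc₂ h₁ h₂ hlt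
end

section
/- Assume there exists θ > 0 such that ∑_{k≥1} P(k)·e^{θ·k} < ∞. Then for every fixed x ≥ 0, every complex number β ≠ 0 with L(β,x) = 0 is real; i.e., all zeros of the function β ↦ L(β,x) on ℂ \ {0} lie on the real axis. -/
/-!
Put `w = -1/β` and `u(z) = ∑ᵢ Gᵢ(z) wⁱ`. Since `G_{i+1}'' = g₂ Gᵢ` and `0 ≤ Gᵢ ≤ G₁ⁱ / i!`, the
series and its termwise derivatives converge uniformly on `[0, ∞)`, so `u'' = w g₂ u` there, with
`u → 1` and `u' → 0` at infinity. If `u(x) = 0`, integrating `(u' ū)' = w g₂ |u|² + |u'|²` over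
`[x, ∞)` gives `w ∫ g₂ |u|² + ∫ |u'|² = 0`. For non-real `w` the imaginary part forces
`∫ g₂ |u|² = 0`, hence `∫ |u'|² = 0`, so `u` vanishes on `[x, ∞)`, contradicting `u → 1`.
The exponential moment gives `g₂(z) ≤ C e^{-εz}`, which makes all the tail integrals finite.
-/
open MeasureTheory Real Set Filter

/-- `g₂(x) = e^{-x} ∑_{k≥2} P(k) x^{k-2}/(k-2)!`. -/
noncomputable def g2 (P : ℕ → ℝ) (x : ℝ) : ℝ :=
  Real.exp (-x) * ∑' k : ℕ, P (k + 2) * x ^ k / (Nat.factorial k : ℝ)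

/-- `G_0(x) = 1`, `G_{i+1}(x) = ∫_x^∞ ∫_y^∞ g₂(z) G_i(z) dz dy`. -/
noncomputable def Gfun (P : ℕ → ℝ) : ℕ → ℝ → ℝ
  | 0 => fun _ => 1
  | (i + 1) => fun x => ∫ y in Ioi x, ∫ z in Ioi y, g2 P z * Gfun P i z

/-- `L(β,x) = ∑_{i=0}^∞ G_i(x) (-1/β)^i` (real version). -/
noncomputable def Lfun (P : ℕ → ℝ) (β : ℝ) (x : ℝ) : ℝ :=
  ∑' i : ℕ, Gfun P i x * (-1 / β) ^ i

/-- `L(β,x) = ∑_{i=0}^∞ G_i(x) (-1/β)^i` (complex version). -/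
noncomputable def Lc (P : ℕ → ℝ) (β : ℂ) (x : ℝ) : ℂ :=
  ∑' i : ℕ, (Gfun P i x : ℂ) * (-1 / β) ^ i

open Topology Nat ComplexConjugate

section ExpGeneratingSeries

theorem pow_div_factorial_le_exp_mul_exp {z : ℝ} (hz : 0 ≤ z) (θ : ℝ) (k : ℕ) :
    z ^ k / (k ! : ℝ) ≤ exp (θ * k) * exp (exp (-θ) * z) := by
  have hk : z ^ k / (k ! : ℝ) = exp (θ * k) * ((exp (-θ) * z) ^ k / (k ! : ℝ)) := by
    rw [mul_pow, ← exp_nat_mul, mul_div_assoc, ← mul_assoc, ← exp_add,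
      show θ * k + k * -θ = 0 by ring, exp_zero, one_mul]
  rw [hk]
  gcongr
  exact pow_div_factorial_le_exp _ (by positivity) k

variable {a : ℕ → ℝ} {θ : ℝ}

theorem norm_mul_pow_div_factorial_le (ha : ∀ k, 0 ≤ a k) (z : ℝ) (k : ℕ) :
    ‖a k * z ^ k / (k ! : ℝ)‖ ≤ a k * exp (θ * k) * exp (exp (-θ) * |z|) := by
  rw [norm_div, norm_mul, norm_pow, Real.norm_of_nonneg (ha k), Real.norm_eq_abs,
    RCLike.norm_natCast, mul_assoc, mul_div_assoc]
  gcongr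
  · exact ha k
  · exact pow_div_factorial_le_exp_mul_exp (abs_nonneg z) θ k

theorem summable_mul_pow_div_factorial (ha : ∀ k, 0 ≤ a k)
    (hsum : Summable fun k => a k * exp (θ * k)) (z : ℝ) :
    Summable fun k => a k * z ^ k / (k ! : ℝ) :=
  .of_norm_bounded (hsum.mul_right _) (norm_mul_pow_div_factorial_le ha z)

theorem tsum_mul_pow_div_factorial_le (ha : ∀ k, 0 ≤ a k)
    (hsum : Summable fun k => a k * exp (θ * k)) {z : ℝ} (hz : 0 ≤ z) :
    ∑' k, a k * z ^ k / (k ! : ℝ) ≤ (∑' k, a k * exp (θ * k)) * exp (exp (-θ) * z) := by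
  rw [← tsum_mul_right]
  refine (summable_mul_pow_div_factorial ha hsum z).tsum_le_tsum (fun k => ?_)
    (hsum.mul_right _)
  simpa [abs_of_nonneg hz] using
    (le_abs_self _).trans (norm_mul_pow_div_factorial_le (θ := θ) ha z k)

theorem continuous_tsum_mul_pow_div_factorial (ha : ∀ k, 0 ≤ a k)
    (hsum : Summable fun k => a k * exp (θ * k)) :
    Continuous fun z => ∑' k, a k * z ^ k / (k ! : ℝ) := by
  refine continuous_iff_continuousAt.2 fun z₀ => ?_
  have hball : Metric.ball 0 (|z₀| + 1) ∈ 𝓝 z₀ :=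
    Metric.isOpen_ball.mem_nhds (by simp)
  refine (continuousOn_tsum (fun k => by fun_prop)
    (hsum.mul_right (exp (exp (-θ) * (|z₀| + 1)))) fun k z hz => ?_).continuousAt hball
  refine (norm_mul_pow_div_factorial_le (θ := θ) ha z k).trans ?_
  have hz' : |z| ≤ |z₀| + 1 := (mem_ball_zero_iff.1 hz).le
  gcongr
  exact mul_nonneg (ha k) (exp_pos _).le

end ExpGeneratingSeries

noncomputable def tailIntegral (f : ℝ → ℝ) (z : ℝ) : ℝ := ∫ t in Ioi z, f t

section TailIntegral

variable {f h : ℝ → ℝ} {a z : ℝ}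

theorem hasDerivWithinAt_tailIntegral (hf : ContinuousOn f (Ici a))
    (hi : IntegrableOn f (Ioi a)) (hz : z ∈ Ici a) :
    HasDerivWithinAt (tailIntegral f) (-f z) (Ici a) z := by
  have : Fact (z ∈ Icc a (z + 1)) := ⟨⟨hz, by linarith⟩⟩
  have hprim : HasDerivWithinAt (fun y => ∫ t in a..y, f t) (f z) (Icc a (z + 1)) z :=
    intervalIntegral.integral_hasDerivWithinAt_right
      (hf.mono Icc_subset_Ici_self |>.intervalIntegrable_of_Icc hz)
      (hf.mono Icc_subset_Ici_self
        |>.stronglyMeasurableAtFilter_nhdsWithin measurableSet_Icc z)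
      (hf.mono Icc_subset_Ici_self z (this.out))
  have hnhds : Icc a (z + 1) ∈ 𝓝[Ici a] z := by
    rw [← Ici_inter_Iic]
    exact inter_mem_nhdsWithin _ (Iic_mem_nhds (by linarith))
  refine ((hprim.const_sub (∫ t in Ioi a, f t)).mono_of_mem_nhdsWithin hnhds).congr_of_mem
    (fun y hy => ?_) hz
  rw [tailIntegral, ← intervalIntegral.integral_Ioi_sub_Ioi hi hy, sub_sub_cancel]

theorem continuousOn_tailIntegral (hf : ContinuousOn f (Ici a)) (hi : IntegrableOn f (Ioi a)) :
    ContinuousOn (tailIntegral f) (Ici a) :=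
  fun _ hz => (hasDerivWithinAt_tailIntegral hf hi hz).continuousWithinAt

theorem hasDerivAt_tailIntegral (hf : ContinuousOn f (Ici a)) (hi : IntegrableOn f (Ioi a))
    (hz : a < z) : HasDerivAt (tailIntegral f) (-f z) z :=
  (hasDerivWithinAt_tailIntegral hf hi (le_of_lt hz)).hasDerivAt (Ici_mem_nhds hz)

theorem tendsto_tailIntegral_atTop (hi : IntegrableOn f (Ioi a)) :
    Tendsto (tailIntegral f) atTop (𝓝 0) := by
  have h := (intervalIntegral_tendsto_integral_Ioi a hi tendsto_id).const_sub
    (∫ t in Ioi a, f t)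
  rw [sub_self] at h
  refine h.congr' ?_
  filter_upwards [eventually_ge_atTop a] with y hy
  rw [id, tailIntegral, ← intervalIntegral.integral_Ioi_sub_Ioi hi hy, sub_sub_cancel]

theorem tailIntegral_nonneg (hf : ∀ t ∈ Ioi z, 0 ≤ f t) : 0 ≤ tailIntegral f z :=
  setIntegral_nonneg measurableSet_Ioi hf

theorem tailIntegral_mono (hfh : ∀ t ∈ Ioi z, f t ≤ h t) (hf : IntegrableOn f (Ioi z))
    (hh : IntegrableOn h (Ioi z)) : tailIntegral f z ≤ tailIntegral h z :=
  setIntegral_mono_on hf hh measurableSet_Ioi hfh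

theorem antitoneOn_tailIntegral (hf : ∀ t ∈ Ioi a, 0 ≤ f t) (hi : IntegrableOn f (Ioi a)) :
    AntitoneOn (tailIntegral f) (Ici a) := by
  intro y hy y' _ hyy'
  refine setIntegral_mono_set (hi.mono_set (Ioi_subset_Ioi hy)) ?_
    (Ioi_subset_Ioi hyy').eventuallyLE
  exact (ae_restrict_iff' measurableSet_Ioi).2
    (ae_of_all _ fun t ht => hf t (mem_Ioi.2 ((mem_Ici.1 hy).trans_lt ht)))

theorem integrableOn_Ioi_of_abs_le (hf : ContinuousOn f (Ici a)) (hh : IntegrableOn h (Ioi a))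
    (hfh : ∀ t ∈ Ioi a, |f t| ≤ h t) : IntegrableOn f (Ioi a) :=
  hh.mono' ((hf.mono Ioi_subset_Ici_self).aestronglyMeasurable measurableSet_Ioi)
    ((ae_restrict_iff' measurableSet_Ioi).2 (ae_of_all _ hfh))

theorem tailIntegral_mul_pow {q H : ℝ → ℝ} (n : ℕ) (hc : ContinuousWithinAt H (Ici z) z)
    (hd : ∀ t ∈ Ioi z, HasDerivAt H (-q t) t)
    (hi : IntegrableOn (fun t => q t * H t ^ n) (Ioi z)) (hlim : Tendsto H atTop (𝓝 0)) :
    tailIntegral (fun t => q t * H t ^ n) z = H z ^ (n + 1) / (n + 1) := by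
  have hderiv : ∀ t ∈ Ioi z,
      HasDerivAt (fun y => -H y ^ (n + 1) / (n + 1)) (q t * H t ^ n) t := by
    intro t ht
    refine (((hd t ht).fun_pow (n + 1)).neg.div_const ((n : ℝ) + 1)).congr_deriv ?_
    push_cast
    field_simp
  have hlim' : Tendsto (fun y => -H y ^ (n + 1) / (n + 1)) atTop (𝓝 0) := by
    simpa using ((hlim.pow (n + 1)).neg.div_const ((n : ℝ) + 1))
  rw [tailIntegral, integral_Ioi_of_hasDerivAt_of_tendsto
    (f := fun y => -H y ^ (n + 1) / (n + 1)) ((hc.pow (n + 1)).neg.div_const _) hderiv hi hlim']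
  ring

end TailIntegral

/-- The last field says that `∫₀^∞ t g(t) dt < ∞`. -/
structure IsAdmissibleKernel (g : ℝ → ℝ) : Prop where
  continuousOn : ContinuousOn g (Ici 0)
  nonneg : ∀ t ∈ Ici (0 : ℝ), 0 ≤ g t
  bddAbove : BddAbove (g '' Ici 0)
  integrableOn : IntegrableOn g (Ioi 0)
  integrableOn_tailIntegral : IntegrableOn (tailIntegral g) (Ioi 0)

noncomputable def kernelIter (g : ℝ → ℝ) : ℕ → ℝ → ℝ
  | 0 => fun _ => 1
  | i + 1 => tailIntegral (tailIntegral fun z => g z * kernelIter g i z)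

/-- `kernelFlux g i = -(kernelIter g (i + 1))'`. -/
noncomputable def kernelFlux (g : ℝ → ℝ) (i : ℕ) : ℝ → ℝ :=
  tailIntegral fun z => g z * kernelIter g i z

namespace IsAdmissibleKernel

variable {g G : ℝ → ℝ} {z t : ℝ} {n : ℕ}

theorem tail_nonneg (hg : IsAdmissibleKernel g) (hz : z ∈ Ici 0) : 0 ≤ tailIntegral g z :=
  _root_.tailIntegral_nonneg fun t ht => hg.nonneg t (mem_Ici.2 (hz.out.trans ht.out.le))

theorem continuousOn_tail (hg : IsAdmissibleKernel g) : ContinuousOn (tailIntegral g) (Ici 0) :=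
  continuousOn_tailIntegral hg.continuousOn hg.integrableOn

theorem tail_antitoneOn (hg : IsAdmissibleKernel g) : AntitoneOn (tailIntegral g) (Ici 0) :=
  antitoneOn_tailIntegral (fun t ht => hg.nonneg t (mem_Ici.2 ht.out.le)) hg.integrableOn

theorem tail₂_nonneg (hg : IsAdmissibleKernel g) (hz : z ∈ Ici 0) :
    0 ≤ tailIntegral (tailIntegral g) z :=
  _root_.tailIntegral_nonneg fun _ ht => hg.tail_nonneg (mem_Ici.2 (hz.out.trans ht.out.le))

theorem tail₂_antitoneOn (hg : IsAdmissibleKernel g) :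
    AntitoneOn (tailIntegral (tailIntegral g)) (Ici 0) :=
  antitoneOn_tailIntegral (fun _ ht => hg.tail_nonneg (mem_Ici.2 ht.out.le))
    hg.integrableOn_tailIntegral

theorem continuousOn_tail₂ (hg : IsAdmissibleKernel g) :
    ContinuousOn (tailIntegral (tailIntegral g)) (Ici 0) :=
  continuousOn_tailIntegral hg.continuousOn_tail hg.integrableOn_tailIntegral

theorem tail₂_pow_div_le (hg : IsAdmissibleKernel g) (hz : z ∈ Ici 0) (hzt : z ≤ t) :
    tailIntegral (tailIntegral g) t ^ n / (n ! : ℝ)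
      ≤ tailIntegral (tailIntegral g) z ^ n / (n ! : ℝ) := by
  have ht : t ∈ Ici (0 : ℝ) := mem_Ici.2 (hz.out.trans hzt)
  gcongr
  · exact hg.tail₂_nonneg ht
  · exact hg.tail₂_antitoneOn hz ht hzt

section Step

variable (hg : IsAdmissibleKernel g)
  (hG : ∀ z ∈ Ici 0, 0 ≤ G z ∧ G z ≤ tailIntegral (tailIntegral g) z ^ n / (n ! : ℝ))
include hg hG

theorem tailIntegral_mul_nonneg (hz : z ∈ Ici 0) : 0 ≤ tailIntegral (fun t => g t * G t) z :=
  _root_.tailIntegral_nonneg fun t ht =>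
    have ht' : t ∈ Ici (0 : ℝ) := mem_Ici.2 (hz.out.trans ht.out.le)
    mul_nonneg (hg.nonneg t ht') (hG t ht').1

variable (hGc : ContinuousOn G (Ici 0))
include hGc

theorem integrableOn_mul : IntegrableOn (fun t => g t * G t) (Ioi 0) := by
  refine integrableOn_Ioi_of_abs_le (hg.continuousOn.mul hGc)
    (hg.integrableOn.mul_const (tailIntegral (tailIntegral g) 0 ^ n / (n ! : ℝ)))
    fun t ht => ?_
  have ht' : t ∈ Ici (0 : ℝ) := mem_Ici.2 ht.out.le
  rw [abs_of_nonneg (mul_nonneg (hg.nonneg t ht') (hG t ht').1)]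
  exact mul_le_mul_of_nonneg_left
    ((hG t ht').2.trans (hg.tail₂_pow_div_le self_mem_Ici ht'.out)) (hg.nonneg t ht')

theorem tailIntegral_mul_le (hz : z ∈ Ici 0) :
    tailIntegral (fun t => g t * G t) z
      ≤ tailIntegral g z * tailIntegral (tailIntegral g) z ^ n / (n ! : ℝ) := by
  calc tailIntegral (fun t => g t * G t) z
      ≤ tailIntegral (fun t => g t * (tailIntegral (tailIntegral g) z ^ n / (n ! : ℝ))) z := by
        refine tailIntegral_mono (fun t ht => ?_)
          ((integrableOn_mul hg hG hGc).mono_set (Ioi_subset_Ioi hz))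
          ((hg.integrableOn.mono_set (Ioi_subset_Ioi hz)).mul_const _)
        have ht' : t ∈ Ici (0 : ℝ) := mem_Ici.2 (hz.out.trans ht.out.le)
        exact mul_le_mul_of_nonneg_left
          ((hG t ht').2.trans (hg.tail₂_pow_div_le hz ht.out.le)) (hg.nonneg t ht')
    _ = tailIntegral g z * tailIntegral (tailIntegral g) z ^ n / (n ! : ℝ) := by
        rw [tailIntegral, integral_mul_const, mul_div_assoc]
        rfl

theorem continuousOn_tailIntegral_mul :
    ContinuousOn (tailIntegral fun t => g t * G t) (Ici 0) :=
  continuousOn_tailIntegral (hg.continuousOn.mul hGc) (integrableOn_mul hg hG hGc)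

theorem integrableOn_tailIntegral_mul :
    IntegrableOn (tailIntegral fun t => g t * G t) (Ioi 0) := by
  refine integrableOn_Ioi_of_abs_le (continuousOn_tailIntegral_mul hg hG hGc)
    (hg.integrableOn_tailIntegral.mul_const (tailIntegral (tailIntegral g) 0 ^ n / (n ! : ℝ)))
    fun t ht => ?_
  have ht' : t ∈ Ici (0 : ℝ) := mem_Ici.2 ht.out.le
  rw [abs_of_nonneg (tailIntegral_mul_nonneg hg hG ht')]
  calc tailIntegral (fun t => g t * G t) t
      ≤ tailIntegral g t * tailIntegral (tailIntegral g) t ^ n / (n ! : ℝ) :=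
        tailIntegral_mul_le hg hG hGc ht'
    _ ≤ tailIntegral g t * (tailIntegral (tailIntegral g) 0 ^ n / (n ! : ℝ)) := by
        rw [mul_div_assoc]
        exact mul_le_mul_of_nonneg_left (hg.tail₂_pow_div_le self_mem_Ici ht'.out)
          (hg.tail_nonneg ht')

theorem tailIntegral_tailIntegral_mul_le (hz : z ∈ Ici 0) :
    tailIntegral (tailIntegral fun t => g t * G t) z
      ≤ tailIntegral (tailIntegral g) z ^ (n + 1) / ((n + 1) ! : ℝ) := by
  have hmaj : IntegrableOn
      (fun t => tailIntegral g t * tailIntegral (tailIntegral g) t ^ n) (Ioi 0) := by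
    refine integrableOn_Ioi_of_abs_le (hg.continuousOn_tail.mul (hg.continuousOn_tail₂.pow n))
      (hg.integrableOn_tailIntegral.mul_const (tailIntegral (tailIntegral g) 0 ^ n))
      fun t ht => ?_
    have ht' : t ∈ Ici (0 : ℝ) := mem_Ici.2 ht.out.le
    rw [abs_of_nonneg (mul_nonneg (hg.tail_nonneg ht') (pow_nonneg (hg.tail₂_nonneg ht') n))]
    exact mul_le_mul_of_nonneg_left
      (pow_le_pow_left₀ (hg.tail₂_nonneg ht') (hg.tail₂_antitoneOn self_mem_Ici ht' ht'.out) n)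
      (hg.tail_nonneg ht')
  have hmaj' := hmaj.mono_set (Ioi_subset_Ioi hz)
  calc tailIntegral (tailIntegral fun t => g t * G t) z
      ≤ tailIntegral
          (fun t => tailIntegral g t * tailIntegral (tailIntegral g) t ^ n / (n ! : ℝ)) z :=
        tailIntegral_mono
          (fun t ht => tailIntegral_mul_le hg hG hGc (mem_Ici.2 (hz.out.trans ht.out.le)))
          ((integrableOn_tailIntegral_mul hg hG hGc).mono_set (Ioi_subset_Ioi hz))
          (hmaj'.div_const _)
    _ = tailIntegral (fun t => tailIntegral g t * tailIntegral (tailIntegral g) t ^ n) z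
          / (n ! : ℝ) := integral_div _ _
    _ = tailIntegral (tailIntegral g) z ^ (n + 1) / ((n + 1) ! : ℝ) := by
        rw [tailIntegral_mul_pow n (hg.continuousOn_tail₂.mono (Ici_subset_Ici.2 hz) z
            self_mem_Ici)
          (fun t ht => hasDerivAt_tailIntegral hg.continuousOn_tail hg.integrableOn_tailIntegral
            (hz.out.trans_lt ht))
          hmaj' (tendsto_tailIntegral_atTop hg.integrableOn_tailIntegral),
          factorial_succ]
        push_cast
        field_simp

end Step

theorem kernelIter_spec (hg : IsAdmissibleKernel g) (n : ℕ) :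
    ContinuousOn (kernelIter g n) (Ici 0) ∧ ∀ z ∈ Ici 0, 0 ≤ kernelIter g n z ∧
      kernelIter g n z ≤ tailIntegral (tailIntegral g) z ^ n / (n ! : ℝ) := by
  induction n with
  | zero => exact ⟨continuousOn_const, fun z _ => by simp [kernelIter]⟩
  | succ n ih =>
    obtain ⟨hGc, hG⟩ := ih
    refine ⟨continuousOn_tailIntegral (continuousOn_tailIntegral_mul hg hG hGc)
      (integrableOn_tailIntegral_mul hg hG hGc), fun z hz => ⟨?_,
      tailIntegral_tailIntegral_mul_le hg hG hGc hz⟩⟩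
    exact _root_.tailIntegral_nonneg fun t ht =>
      tailIntegral_mul_nonneg hg hG (mem_Ici.2 (hz.out.trans ht.out.le))

theorem continuousOn_kernelIter (hg : IsAdmissibleKernel g) (n : ℕ) :
    ContinuousOn (kernelIter g n) (Ici 0) :=
  (hg.kernelIter_spec n).1

theorem kernelIter_nonneg (hg : IsAdmissibleKernel g) (n : ℕ) (hz : z ∈ Ici 0) :
    0 ≤ kernelIter g n z :=
  ((hg.kernelIter_spec n).2 z hz).1

theorem abs_kernelIter_le (hg : IsAdmissibleKernel g) (n : ℕ) (hz : z ∈ Ici 0) :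
    |kernelIter g n z| ≤ tailIntegral (tailIntegral g) 0 ^ n / (n ! : ℝ) := by
  rw [abs_of_nonneg (hg.kernelIter_nonneg n hz)]
  exact ((hg.kernelIter_spec n).2 z hz).2.trans (hg.tail₂_pow_div_le self_mem_Ici hz.out)

theorem abs_mul_kernelIter_le (hg : IsAdmissibleKernel g) {C : ℝ} (hC : ∀ t ∈ Ici 0, g t ≤ C)
    (n : ℕ) (hz : z ∈ Ici 0) :
    |g z * kernelIter g n z| ≤ C * (tailIntegral (tailIntegral g) 0 ^ n / (n ! : ℝ)) := by
  rw [abs_mul, abs_of_nonneg (hg.nonneg z hz)]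
  exact mul_le_mul (hC z hz) (hg.abs_kernelIter_le n hz) (abs_nonneg _)
    ((hg.nonneg z hz).trans (hC z hz))

theorem continuousOn_kernelFlux (hg : IsAdmissibleKernel g) (n : ℕ) :
    ContinuousOn (kernelFlux g n) (Ici 0) :=
  continuousOn_tailIntegral_mul hg (hg.kernelIter_spec n).2 (hg.kernelIter_spec n).1

theorem integrableOn_kernelFlux (hg : IsAdmissibleKernel g) (n : ℕ) :
    IntegrableOn (kernelFlux g n) (Ioi 0) :=
  integrableOn_tailIntegral_mul hg (hg.kernelIter_spec n).2 (hg.kernelIter_spec n).1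

theorem abs_kernelFlux_le (hg : IsAdmissibleKernel g) (n : ℕ) (hz : z ∈ Ici 0) :
    |kernelFlux g n z|
      ≤ tailIntegral g 0 * (tailIntegral (tailIntegral g) 0 ^ n / (n ! : ℝ)) := by
  rw [kernelFlux, abs_of_nonneg (tailIntegral_mul_nonneg hg (hg.kernelIter_spec n).2 hz),
    ← mul_div_assoc]
  refine (tailIntegral_mul_le hg (hg.kernelIter_spec n).2 (hg.kernelIter_spec n).1 hz).trans ?_
  gcongr
  · exact pow_nonneg (hg.tail₂_nonneg hz) n
  · exact hg.tail_nonneg self_mem_Ici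
  · exact hg.tail_antitoneOn self_mem_Ici hz hz.out
  · exact hg.tail₂_nonneg hz
  · exact hg.tail₂_antitoneOn self_mem_Ici hz hz.out

theorem hasDerivAt_kernelIter_succ (hg : IsAdmissibleKernel g) (n : ℕ) (hz : 0 < z) :
    HasDerivAt (kernelIter g (n + 1)) (-kernelFlux g n z) z :=
  hasDerivAt_tailIntegral (hg.continuousOn_kernelFlux n) (hg.integrableOn_kernelFlux n) hz

theorem hasDerivAt_kernelFlux (hg : IsAdmissibleKernel g) (n : ℕ) (hz : 0 < z) :
    HasDerivAt (kernelFlux g n) (-(g z * kernelIter g n z)) z :=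
  hasDerivAt_tailIntegral (hg.continuousOn.mul (hg.continuousOn_kernelIter n))
    (integrableOn_mul hg (hg.kernelIter_spec n).2 (hg.kernelIter_spec n).1) hz

theorem tendsto_kernelIter_succ (hg : IsAdmissibleKernel g) (n : ℕ) :
    Tendsto (kernelIter g (n + 1)) atTop (𝓝 0) :=
  tendsto_tailIntegral_atTop (hg.integrableOn_kernelFlux n)

theorem tendsto_kernelFlux (hg : IsAdmissibleKernel g) (n : ℕ) :
    Tendsto (kernelFlux g n) atTop (𝓝 0) :=
  tendsto_tailIntegral_atTop
    (integrableOn_mul hg (hg.kernelIter_spec n).2 (hg.kernelIter_spec n).1)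

end IsAdmissibleKernel

theorem norm_ofReal_mul_pow_le {r K M : ℝ} (w : ℂ) {n : ℕ}
    (h : |r| ≤ K * (M ^ n / (n ! : ℝ))) :
    ‖(r : ℂ) * w ^ n‖ ≤ K * ((M * ‖w‖) ^ n / (n ! : ℝ)) := by
  rw [norm_mul, Complex.norm_real, Real.norm_eq_abs, norm_pow, mul_pow]
  calc |r| * ‖w‖ ^ n ≤ K * (M ^ n / (n ! : ℝ)) * ‖w‖ ^ n :=
        mul_le_mul_of_nonneg_right h (by positivity)
    _ = K * (M ^ n * ‖w‖ ^ n / (n ! : ℝ)) := by ring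

theorem norm_ofReal_mul_pow_succ_le {r K M : ℝ} (w : ℂ) {n : ℕ}
    (h : |r| ≤ K * (M ^ n / (n ! : ℝ))) :
    ‖(r : ℂ) * w ^ (n + 1)‖ ≤ K * ‖w‖ * ((M * ‖w‖) ^ n / (n ! : ℝ)) := by
  rw [pow_succ, ← mul_assoc, norm_mul, mul_right_comm K]
  exact mul_le_mul_of_nonneg_right (norm_ofReal_mul_pow_le w h) (norm_nonneg w)

noncomputable def kernelSeries (g : ℝ → ℝ) (w : ℂ) (z : ℝ) : ℂ :=
  ∑' n, (kernelIter g n z : ℂ) * w ^ n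

noncomputable def fluxSeries (g : ℝ → ℝ) (w : ℂ) (z : ℝ) : ℂ :=
  ∑' n, (kernelFlux g n z : ℂ) * w ^ (n + 1)

namespace IsAdmissibleKernel

variable {g : ℝ → ℝ} {z : ℝ} (w : ℂ)

theorem norm_kernelIter_mul_pow_le (hg : IsAdmissibleKernel g) (n : ℕ) (hz : z ∈ Ici 0) :
    ‖(kernelIter g n z : ℂ) * w ^ n‖
      ≤ (tailIntegral (tailIntegral g) 0 * ‖w‖) ^ n / (n ! : ℝ) := by
  simpa using norm_ofReal_mul_pow_le (K := 1) w (by simpa using hg.abs_kernelIter_le n hz)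

theorem norm_kernelFlux_mul_pow_le (hg : IsAdmissibleKernel g) (n : ℕ) (hz : z ∈ Ici 0) :
    ‖(kernelFlux g n z : ℂ) * w ^ (n + 1)‖
      ≤ tailIntegral g 0 * ‖w‖ * ((tailIntegral (tailIntegral g) 0 * ‖w‖) ^ n / (n ! : ℝ)) :=
  norm_ofReal_mul_pow_succ_le w (hg.abs_kernelFlux_le n hz)

theorem summable_kernelSeries (hg : IsAdmissibleKernel g) (hz : z ∈ Ici 0) :
    Summable fun n => (kernelIter g n z : ℂ) * w ^ n :=
  .of_norm_bounded (Real.summable_pow_div_factorial _)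
    fun n => hg.norm_kernelIter_mul_pow_le w n hz

theorem continuousOn_kernelSeries (hg : IsAdmissibleKernel g) :
    ContinuousOn (kernelSeries g w) (Ici 0) :=
  continuousOn_tsum (fun n => (Complex.continuous_ofReal.comp_continuousOn
      (hg.continuousOn_kernelIter n)).mul continuousOn_const)
    (Real.summable_pow_div_factorial _)
    fun n _ hz => hg.norm_kernelIter_mul_pow_le w n hz

theorem continuousOn_fluxSeries (hg : IsAdmissibleKernel g) :
    ContinuousOn (fluxSeries g w) (Ici 0) :=
  continuousOn_tsum (fun n => (Complex.continuous_ofReal.comp_continuousOn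
      (hg.continuousOn_kernelFlux n)).mul continuousOn_const)
    ((Real.summable_pow_div_factorial _).mul_left _)
    fun n _ hz => hg.norm_kernelFlux_mul_pow_le w n hz

theorem kernelSeries_eq_one_add (hg : IsAdmissibleKernel g) (hz : z ∈ Ici 0) :
    kernelSeries g w z = 1 + ∑' n, (kernelIter g (n + 1) z : ℂ) * w ^ (n + 1) := by
  rw [kernelSeries, (hg.summable_kernelSeries w hz).tsum_eq_zero_add]
  simp [kernelIter]

theorem hasDerivAt_kernelSeries (hg : IsAdmissibleKernel g) (hz : 0 < z) :
    HasDerivAt (kernelSeries g w) (-fluxSeries g w z) z := by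
  have hsum : HasDerivAt (fun y => ∑' n, (kernelIter g (n + 1) y : ℂ) * w ^ (n + 1))
      (∑' n, ((-kernelFlux g n z : ℝ) : ℂ) * w ^ (n + 1)) z :=
    hasDerivAt_tsum_of_isPreconnected ((Real.summable_pow_div_factorial _).mul_left _)
      isOpen_Ioi isPreconnected_Ioi
      (fun n y hy => ((hg.hasDerivAt_kernelIter_succ n hy).ofReal_comp).mul_const _)
      (fun n y hy => norm_ofReal_mul_pow_succ_le w
        ((abs_neg _).trans_le (hg.abs_kernelFlux_le n (mem_Ici.2 (le_of_lt hy)))))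
      (mem_Ioi.2 one_pos)
      ((summable_nat_add_iff 1).2 (hg.summable_kernelSeries w (mem_Ici.2 zero_le_one))) hz
  have hneg : ∑' n, ((-kernelFlux g n z : ℝ) : ℂ) * w ^ (n + 1) = -fluxSeries g w z := by
    simp only [Complex.ofReal_neg, neg_mul, tsum_neg, fluxSeries]
  rw [← hneg]
  refine (hsum.const_add 1).congr_of_eventuallyEq ?_
  filter_upwards [Ioi_mem_nhds hz] with y hy
  exact hg.kernelSeries_eq_one_add w (mem_Ici.2 (le_of_lt hy))

theorem hasDerivAt_fluxSeries (hg : IsAdmissibleKernel g) (hz : 0 < z) :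
    HasDerivAt (fluxSeries g w) (-(w * g z * kernelSeries g w z)) z := by
  obtain ⟨C, hC⟩ := hg.bddAbove
  have hgC : ∀ t ∈ Ici 0, g t ≤ C := fun t ht => hC (mem_image_of_mem g ht)
  have hsum := hasDerivAt_tsum_of_isPreconnected
    ((Real.summable_pow_div_factorial (tailIntegral (tailIntegral g) 0 * ‖w‖)).mul_left
      (C * ‖w‖))
    isOpen_Ioi isPreconnected_Ioi
    (fun n y hy => ((hg.hasDerivAt_kernelFlux n hy).ofReal_comp).mul_const (w ^ (n + 1)))
    (fun n y hy => norm_ofReal_mul_pow_succ_le w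
      ((abs_neg _).trans_le (hg.abs_mul_kernelIter_le hgC n (mem_Ici.2 (le_of_lt hy)))))
    (mem_Ioi.2 one_pos)
    (.of_norm_bounded ((Real.summable_pow_div_factorial _).mul_left _)
      fun n => hg.norm_kernelFlux_mul_pow_le w n (mem_Ici.2 zero_le_one)) hz
  have heq : -(w * g z * kernelSeries g w z)
      = ∑' n, ((-(g z * kernelIter g n z) : ℝ) : ℂ) * w ^ (n + 1) := by
    rw [kernelSeries, neg_mul_eq_neg_mul, ← tsum_mul_left]
    congr 1 with n
    push_cast
    ring
  rw [heq]
  exact hsum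

theorem tendsto_kernelSeries (hg : IsAdmissibleKernel g) :
    Tendsto (kernelSeries g w) atTop (𝓝 1) := by
  have h := tendsto_tsum_of_dominated_convergence (𝓕 := atTop)
    (Real.summable_pow_div_factorial (tailIntegral (tailIntegral g) 0 * ‖w‖))
    (f := fun z n => (kernelIter g n z : ℂ) * w ^ n) (g := fun n => (0 : ℂ) ^ n)
    (fun n => ?_) ?_
  · rwa [tsum_eq_single 0 fun n hn => zero_pow hn, pow_zero] at h
  · cases n with
    | zero => simp [kernelIter]
    | succ n =>
      simpa using ((Complex.continuous_ofReal.tendsto 0).comp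
        (hg.tendsto_kernelIter_succ n)).mul_const (w ^ (n + 1))
  · filter_upwards [eventually_ge_atTop 0] with z hz n
    exact hg.norm_kernelIter_mul_pow_le w n hz

theorem tendsto_fluxSeries (hg : IsAdmissibleKernel g) :
    Tendsto (fluxSeries g w) atTop (𝓝 0) := by
  have h := tendsto_tsum_of_dominated_convergence (𝓕 := atTop)
    ((Real.summable_pow_div_factorial (tailIntegral (tailIntegral g) 0 * ‖w‖)).mul_left
      (tailIntegral g 0 * ‖w‖))
    (f := fun z n => (kernelFlux g n z : ℂ) * w ^ (n + 1)) (g := fun _ => 0)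
    (fun n => by
      simpa using ((Complex.continuous_ofReal.tendsto 0).comp
        (hg.tendsto_kernelFlux n)).mul_const (w ^ (n + 1)))
    (by
      filter_upwards [eventually_ge_atTop 0] with z hz n
      exact hg.norm_kernelFlux_mul_pow_le w n hz)
  rwa [tsum_zero] at h

end IsAdmissibleKernel

theorem intervalIntegral_eq_zero_of_tendsto {f : ℝ → ℝ} {x T : ℝ}
    (hf : ContinuousOn f (Ici x)) (hf0 : ∀ t ∈ Ici x, 0 ≤ f t)
    (hlim : Tendsto (fun T => ∫ t in x..T, f t) atTop (𝓝 0)) (hT : x ≤ T) :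
    ∫ t in x..T, f t = 0 := by
  refine le_antisymm (ge_of_tendsto hlim ?_)
    (intervalIntegral.integral_nonneg hT fun t ht => hf0 t ht.1)
  filter_upwards [eventually_ge_atTop T] with T' hT'
  refine intervalIntegral.integral_mono_interval le_rfl hT hT' ?_
    ((hf.mono Icc_subset_Ici_self).intervalIntegrable_of_Icc (hT.trans hT'))
  exact (ae_restrict_iff' measurableSet_Ioc).2 (ae_of_all _ fun t ht => hf0 t ht.1.le)

theorem eq_of_hasDerivAt_of_intervalIntegral_normSq_eq_zero {u v : ℝ → ℂ} {x T : ℝ}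
    (hT : x ≤ T) (hu : ContinuousOn u (Icc x T)) (hv : ContinuousOn v (Icc x T))
    (hu' : ∀ z ∈ Ioo x T, HasDerivAt u (-v z) z)
    (hv0 : ∫ t in x..T, Complex.normSq (v t) = 0) : u T = u x := by
  have hae : ∀ᵐ t ∂volume.restrict (Ioc x T), -v t = 0 := by
    have h := (intervalIntegral.integral_eq_zero_iff_of_le_of_nonneg_ae hT
      (ae_of_all _ fun t => Complex.normSq_nonneg (v t))
      ((Complex.continuous_normSq.comp_continuousOn hv).intervalIntegrable_of_Icc hT)).1 hv0
    filter_upwards [h] with t ht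
    rw [neg_eq_zero, ← Complex.normSq_eq_zero]
    exact ht
  have hFTC := intervalIntegral.integral_eq_sub_of_hasDeriv_right_of_le hT hu
    (fun z hz => (hu' z hz).hasDerivWithinAt) (hv.neg.intervalIntegrable_of_Icc hT)
  rw [intervalIntegral.integral_of_le hT, integral_congr_ae hae, integral_zero, eq_comm,
    sub_eq_zero] at hFTC
  exact hFTC

section Energy

variable {u v : ℝ → ℂ} {g : ℝ → ℝ} {w : ℂ} {x : ℝ}
  (hg : ContinuousOn g (Ici x)) (hu : ContinuousOn u (Ici x)) (hv : ContinuousOn v (Ici x))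
  (hu' : ∀ z, x < z → HasDerivAt u (-v z) z)
  (hv' : ∀ z, x < z → HasDerivAt v (-(w * g z * u z)) z)
include hg hu hv hu' hv'

theorem energy_identity (hux : u x = 0) {T : ℝ} (hT : x ≤ T) :
    v T * conj (u T) = -(w * ↑(∫ t in x..T, g t * Complex.normSq (u t))
      + ↑(∫ t in x..T, Complex.normSq (v t))) := by
  have hIcc : Icc x T ⊆ Ici x := Icc_subset_Ici_self
  have hc₁ : ContinuousOn (fun t => g t * Complex.normSq (u t)) (Icc x T) :=
    (hg.mul (Complex.continuous_normSq.comp_continuousOn hu)).mono hIcc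
  have hc₂ : ContinuousOn (fun t => Complex.normSq (v t)) (Icc x T) :=
    (Complex.continuous_normSq.comp_continuousOn hv).mono hIcc
  have hi₁ : IntervalIntegrable (fun t => w * ↑(g t * Complex.normSq (u t))) volume x T :=
    ContinuousOn.intervalIntegrable_of_Icc hT
      (continuousOn_const.mul (Complex.continuous_ofReal.comp_continuousOn hc₁))
  have hi₂ : IntervalIntegrable (fun t => (↑(Complex.normSq (v t)) : ℂ)) volume x T :=
    (Complex.continuous_ofReal.comp_continuousOn hc₂).intervalIntegrable_of_Icc hT
  have hderiv : ∀ z ∈ Ioo x T, HasDerivWithinAt (fun y => v y * conj (u y))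
      (-(w * ↑(g z * Complex.normSq (u z)) + ↑(Complex.normSq (v z)))) (Ioi z) z := by
    intro z hz
    refine (((hv' z hz.1).mul (hu' z hz.1).star).congr_deriv ?_).hasDerivWithinAt
    simp only [star_neg, Complex.star_def, Complex.ofReal_mul, ← Complex.mul_conj]
    ring
  have hFTC := intervalIntegral.integral_eq_sub_of_hasDeriv_right_of_le
    (f := fun y => v y * conj (u y)) hT
    ((hv.mul (Complex.continuous_conj.comp_continuousOn hu)).mono hIcc) hderiv
    (hi₁.add hi₂).neg
  rw [hux, map_zero, mul_zero, sub_zero] at hFTC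
  rw [← hFTC, intervalIntegral.integral_neg, intervalIntegral.integral_add hi₁ hi₂,
    intervalIntegral.integral_const_mul, intervalIntegral.integral_ofReal,
    intervalIntegral.integral_ofReal]

theorem eqOn_zero_of_im_ne_zero (hw : w.im ≠ 0) (hux : u x = 0)
    (hlim : Tendsto (fun z => v z * conj (u z)) atTop (𝓝 0)) : EqOn u 0 (Ici x) := by
  set I₁ := fun T => ∫ t in x..T, g t * Complex.normSq (u t)
  set I₂ := fun T => ∫ t in x..T, Complex.normSq (v t)
  have hE : ∀ T, x ≤ T → v T * conj (u T) = -(w * I₁ T + I₂ T) :=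
    fun T hT => energy_identity hg hu hv hu' hv' hux hT
  have hI₁ : Tendsto I₁ atTop (𝓝 0) := by
    have h := ((Complex.continuous_im.tendsto 0).comp hlim).neg.div_const w.im
    rw [Complex.zero_im, neg_zero, zero_div] at h
    refine h.congr' ?_
    filter_upwards [eventually_ge_atTop x] with T hT
    simp only [Function.comp_apply, hE T hT, Complex.neg_im, Complex.add_im, Complex.mul_im,
      Complex.ofReal_re, Complex.ofReal_im, mul_zero, add_zero, zero_add, neg_neg]
    field_simp
  have hI₂ : Tendsto I₂ atTop (𝓝 0) := by
    have h := (((Complex.continuous_re.tendsto 0).comp hlim).neg).sub (hI₁.const_mul w.re)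
    rw [Complex.zero_re, neg_zero, mul_zero, sub_zero] at h
    refine h.congr' ?_
    filter_upwards [eventually_ge_atTop x] with T hT
    simp only [Function.comp_apply, hE T hT, Complex.neg_re, Complex.add_re, Complex.mul_re,
      Complex.ofReal_re, Complex.ofReal_im, mul_zero, sub_zero, neg_neg]
    ring
  intro T hT
  rw [Pi.zero_apply, ← hux]
  exact eq_of_hasDerivAt_of_intervalIntegral_normSq_eq_zero hT (hu.mono Icc_subset_Ici_self)
    (hv.mono Icc_subset_Ici_self) (fun z hz => hu' z hz.1)
    (intervalIntegral_eq_zero_of_tendsto (Complex.continuous_normSq.comp_continuousOn hv)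
      (fun t _ => Complex.normSq_nonneg _) hI₂ hT)

end Energy

theorem IsAdmissibleKernel.kernelSeries_ne_zero {g : ℝ → ℝ} (hg : IsAdmissibleKernel g)
    {w : ℂ} (hw : w.im ≠ 0) {x : ℝ} (hx : 0 ≤ x) : kernelSeries g w x ≠ 0 := by
  intro hzero
  have hIci : Ici x ⊆ Ici 0 := Ici_subset_Ici.2 hx
  have hlim : Tendsto (fun z => fluxSeries g w z * conj (kernelSeries g w z)) atTop (𝓝 0) := by
    simpa using (hg.tendsto_fluxSeries w).mul
      ((Complex.continuous_conj.tendsto 1).comp (hg.tendsto_kernelSeries w))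
  have hvanish := eqOn_zero_of_im_ne_zero (hg.continuousOn.mono hIci)
    ((hg.continuousOn_kernelSeries w).mono hIci) ((hg.continuousOn_fluxSeries w).mono hIci)
    (fun z hz => hg.hasDerivAt_kernelSeries w (hx.trans_lt hz))
    (fun z hz => hg.hasDerivAt_fluxSeries w (hx.trans_lt hz)) hw hzero hlim
  have hlim0 : Tendsto (kernelSeries g w) atTop (𝓝 0) := by
    refine tendsto_const_nhds.congr' ?_
    filter_upwards [eventually_ge_atTop x] with z hz
    exact (hvanish hz).symm
  exact one_ne_zero (tendsto_nhds_unique (hg.tendsto_kernelSeries w) hlim0)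

theorem IsAdmissibleKernel.of_le_exp {g : ℝ → ℝ} {C ε : ℝ} (hε : 0 < ε)
    (hc : ContinuousOn g (Ici 0)) (h0 : ∀ t ∈ Ici 0, 0 ≤ g t)
    (hle : ∀ t ∈ Ici 0, g t ≤ C * exp (-ε * t)) : IsAdmissibleKernel g := by
  have hC : 0 ≤ C := by simpa using (h0 0 self_mem_Ici).trans (hle 0 self_mem_Ici)
  have hint : IntegrableOn g (Ioi 0) :=
    integrableOn_Ioi_of_abs_le hc ((exp_neg_integrableOn_Ioi 0 hε).const_mul C) fun t ht =>
      (abs_of_nonneg (h0 t (mem_Ici.2 ht.out.le))).trans_le (hle t (mem_Ici.2 ht.out.le))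
  have htail : ∀ t ∈ Ioi (0 : ℝ), |tailIntegral g t| ≤ C / ε * exp (-ε * t) := by
    intro t ht
    have hIoi : ∀ s ∈ Ioi t, s ∈ Ici (0 : ℝ) := fun s hs => mem_Ici.2 (ht.out.trans hs.out).le
    rw [abs_of_nonneg (tailIntegral_nonneg fun s hs => h0 s (hIoi s hs))]
    calc tailIntegral g t ≤ tailIntegral (fun s => C * exp (-ε * s)) t :=
          tailIntegral_mono (fun s hs => hle s (hIoi s hs))
            (hint.mono_set (Ioi_subset_Ioi ht.out.le)) ((exp_neg_integrableOn_Ioi t hε).const_mul C)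
      _ = C / ε * exp (-ε * t) := by
          rw [tailIntegral, integral_const_mul, integral_exp_mul_Ioi (neg_lt_zero.2 hε)]
          field_simp
  refine ⟨hc, h0, ⟨C, ?_⟩, hint, ?_⟩
  · rintro _ ⟨t, ht, rfl⟩
    exact (hle t ht).trans (mul_le_of_le_one_right hC
      (exp_le_one_iff.2 (by nlinarith [ht.out])))
  · exact integrableOn_Ioi_of_abs_le (continuousOn_tailIntegral hc hint)
      ((exp_neg_integrableOn_Ioi 0 hε).const_mul (C / ε)) htail

theorem summable_coeff_g2 {P : ℕ → ℝ} {θ : ℝ} (hP : ∀ k, 0 ≤ P k) (hθ : 0 ≤ θ)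
    (hMθ : Summable fun k : ℕ => P k * exp (θ * k)) :
    Summable fun k : ℕ => P (k + 2) * exp (θ * k) :=
  ((summable_nat_add_iff 2).2 hMθ).of_nonneg_of_le
    (fun k => mul_nonneg (hP _) (exp_pos _).le)
    fun k => mul_le_mul_of_nonneg_left (exp_le_exp.2 (by push_cast; nlinarith)) (hP _)

theorem g2_le_exp {P : ℕ → ℝ} {θ : ℝ} (hP : ∀ k, 0 ≤ P k) (hθ : 0 ≤ θ)
    (hMθ : Summable fun k : ℕ => P k * exp (θ * k)) {z : ℝ} (hz : 0 ≤ z) :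
    g2 P z ≤ (∑' k : ℕ, P (k + 2) * exp (θ * k)) * exp (-(1 - exp (-θ)) * z) := by
  calc g2 P z ≤ exp (-z) * ((∑' k : ℕ, P (k + 2) * exp (θ * k)) * exp (exp (-θ) * z)) :=
        mul_le_mul_of_nonneg_left
          (tsum_mul_pow_div_factorial_le (fun k => hP _) (summable_coeff_g2 hP hθ hMθ) hz)
          (exp_pos _).le
    _ = (∑' k : ℕ, P (k + 2) * exp (θ * k)) * exp (-(1 - exp (-θ)) * z) := by
        rw [mul_left_comm, ← exp_add]
        ring_nf

theorem isAdmissibleKernel_g2 {P : ℕ → ℝ} {θ : ℝ} (hP : ∀ k, 0 ≤ P k) (hθ : 0 < θ)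
    (hMθ : Summable fun k : ℕ => P k * exp (θ * k)) : IsAdmissibleKernel (g2 P) :=
  .of_le_exp (sub_pos.2 (exp_lt_one_iff.2 (neg_lt_zero.2 hθ)))
    ((continuous_exp.comp continuous_neg).mul
      (continuous_tsum_mul_pow_div_factorial (fun k => hP _)
        (summable_coeff_g2 hP hθ.le hMθ))).continuousOn
    (fun z hz => mul_nonneg (exp_pos _).le
      (tsum_nonneg fun k => by have := hP (k + 2); have := hz.out; positivity))
    fun z hz => g2_le_exp hP hθ.le hMθ hz.out

theorem Gfun_eq_kernelIter (P : ℕ → ℝ) : Gfun P = kernelIter (g2 P) := by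
  funext i
  induction i with
  | zero => rfl
  | succ i ih =>
    rw [Gfun, kernelIter, ih]
    rfl

theorem stmt_8_general (P : ℕ → ℝ)
    (hPnonneg : ∀ k, 0 ≤ P k)
    (θ : ℝ) (hθ : 0 < θ)
    (hMθ : Summable fun k : ℕ => P k * Real.exp (θ * k))
    (x : ℝ) (hx : 0 ≤ x) (β : ℂ) (hzero : Lc P β x = 0) :
    β.im = 0 := by
  by_contra hβ
  have hw : (-1 / β).im ≠ 0 := by
    rw [neg_div, Complex.neg_im, one_div, Complex.inv_im, neg_div, neg_neg]
    exact div_ne_zero hβ (Complex.normSq_pos.2 fun h => hβ (by simp [h])).ne'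
  rw [Lc, Gfun_eq_kernelIter] at hzero
  exact (isAdmissibleKernel_g2 hPnonneg hθ hMθ).kernelSeries_ne_zero hw hx hzero

theorem stmt_8 (P : ℕ → ℝ)
    (hP0 : P 0 = 0) (hPnonneg : ∀ k, 0 ≤ P k) (hPsum : ∑' k, P k = 1)
    (hPmean : Summable fun k : ℕ => (k : ℝ) * P k) (hP1 : P 1 < 1)
    (θ : ℝ) (hθ : 0 < θ)
    (hMθ : Summable fun k : ℕ => P k * Real.exp (θ * k))
    (x : ℝ) (hx : 0 ≤ x) (β : ℂ) (hβ : β ≠ 0) (hzero : Lc P β x = 0) :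
    β.im = 0 :=
  stmt_8_general P hPnonneg θ hθ hMθ x hx β hzero
end

section
/- Assume there exists θ > 0 such that ∑_{k≥1} P(k)·e^{θ·k} < ∞, and let β₀ be as above. Then for every x ≥ 0, β₀·L(β₀,x) = ∫_0^x ∫_y^∞ g₂(z)·L(β₀,z) dz dy = ∫_0^∞ min(x,z)·g₂(z)·L(β₀,z) dz; that is, L(β₀,·) is an eigenfunction with eigenvalue β₀ of the integral operator with kernel min(x,z)·g₂(z). -/
open MeasureTheory Real Set Filter

/-!
Write `T h (x) = ∫_x^∞ ∫_y^∞ h`, so that `G_{i+1} = T (g₂ G_i)`. Since `P(k) ≤ M e^{-θ k}`, one has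
`g₂(z) ≤ M e^{-δ z}` with `δ = 1 - e^{-θ} > 0`, and each application of `T` then gains a factor
`((i+1) δ)⁻²`: `|G_i(x)| ≤ (M/δ²)^i / (i!)² · e^{-i δ x}`. This domination lets `T` commute with the
series defining `L`, giving `L(β, x) = 1 - β⁻¹ T (g₂ L(β, ·)) (x)`. At `x = 0` the hypothesis
`L(β₀, 0) = 0` gives `T (g₂ L)(0) = β₀`, hence `β₀ L(β₀, x) = T (g₂ L)(0) - T (g₂ L)(x)
= ∫_0^x ∫_y^∞ g₂ L`, and Fubini rewrites this as `∫_0^∞ min(x, z) g₂(z) L(β₀, z) dz`.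
-/

def ExpDominated (a δ C : ℝ) (f : ℝ → ℝ) : Prop :=
  Measurable f ∧ ∀ z, a ≤ z → ‖f z‖ ≤ C * exp (-δ * z)

lemma integral_exp_neg_mul_Ioi {δ : ℝ} (hδ : 0 < δ) (a : ℝ) :
    ∫ z in Ioi a, exp (-δ * z) = exp (-δ * a) / δ := by
  rw [integral_exp_mul_Ioi (neg_lt_zero.2 hδ), neg_div_neg_eq]

lemma measurable_setIntegral_Ioi {f : ℝ → ℝ} (hf : Measurable f) :
    Measurable fun y => ∫ z in Ioi y, f z := by
  have hF : StronglyMeasurable ({p : ℝ × ℝ | p.1 < p.2}.indicator fun p => f p.2) :=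
    ((hf.comp measurable_snd).indicator
      (measurableSet_lt measurable_fst measurable_snd)).stronglyMeasurable
  convert (hF.integral_prod_right' (ν := volume)).measurable using 2 with y
  rw [← integral_indicator measurableSet_Ioi]
  rfl

namespace ExpDominated

variable {a b δ δ' C C' : ℝ} {f g : ℝ → ℝ}

lemma mono (h : ExpDominated a δ C f) (hab : a ≤ b) : ExpDominated b δ C f :=
  ⟨h.1, fun z hz => h.2 z (hab.trans hz)⟩

lemma const_nonneg (h : ExpDominated a δ C f) : 0 ≤ C :=
  nonneg_of_mul_nonneg_left ((norm_nonneg _).trans (h.2 a le_rfl)) (exp_pos _)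

lemma mono_rate (h : ExpDominated a δ C f) (ha : 0 ≤ a) (hδ : δ' ≤ δ) :
    ExpDominated a δ' C f :=
  ⟨h.1, fun z hz => (h.2 z hz).trans <| mul_le_mul_of_nonneg_left
    (exp_le_exp.2 (by nlinarith)) h.const_nonneg⟩

lemma mul (hf : ExpDominated a δ C f) (hg : ExpDominated a δ' C' g) :
    ExpDominated a (δ + δ') (C * C') fun z => f z * g z := by
  refine ⟨hf.1.mul hg.1, fun z hz => ?_⟩
  calc ‖f z * g z‖ = ‖f z‖ * ‖g z‖ := norm_mul _ _
    _ ≤ C * exp (-δ * z) * (C' * exp (-δ' * z)) :=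
      mul_le_mul (hf.2 z hz) (hg.2 z hz) (norm_nonneg _) ((norm_nonneg _).trans (hf.2 z hz))
    _ = C * C' * exp (-(δ + δ') * z) := by
      rw [neg_add, add_mul, exp_add]; ring

lemma mul_const (hf : ExpDominated a δ C f) (c : ℝ) :
    ExpDominated a δ (C * |c|) fun z => f z * c := by
  refine ⟨hf.1.mul_const c, fun z hz => ?_⟩
  rw [norm_mul, norm_eq_abs c, mul_right_comm]
  exact mul_le_mul_of_nonneg_right (hf.2 z hz) (abs_nonneg c)

lemma integrableOn (hf : ExpDominated a δ C f) (hδ : 0 < δ) : IntegrableOn f (Ioi a) :=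
  ((exp_neg_integrableOn_Ioi a hδ).const_mul C).mono' hf.1.aestronglyMeasurable <|
    (ae_restrict_mem measurableSet_Ioi).mono fun z hz => hf.2 z (le_of_lt hz)

lemma integral_norm_le (hf : ExpDominated a δ C f) (hδ : 0 < δ) :
    ∫ z in Ioi a, ‖f z‖ ≤ C / δ * exp (-δ * a) := by
  calc ∫ z in Ioi a, ‖f z‖ ≤ ∫ z in Ioi a, C * exp (-δ * z) :=
        setIntegral_mono_on (hf.integrableOn hδ).norm
          ((exp_neg_integrableOn_Ioi a hδ).const_mul C)
          measurableSet_Ioi fun z hz => hf.2 z (le_of_lt hz)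
    _ = C / δ * exp (-δ * a) := by
      rw [integral_const_mul, integral_exp_neg_mul_Ioi hδ]; ring

lemma setIntegral_Ioi (hf : ExpDominated a δ C f) (hδ : 0 < δ) :
    ExpDominated a δ (C / δ) fun y => ∫ z in Ioi y, f z :=
  ⟨measurable_setIntegral_Ioi hf.1, fun _ hy =>
    (norm_integral_le_integral_norm _).trans ((hf.mono hy).integral_norm_le hδ)⟩

variable {F : ℕ → ℝ → ℝ} {c : ℕ → ℝ}

lemma summable (hf : ∀ i, ExpDominated a δ (c i) (F i)) (hc : Summable c) {z : ℝ}
    (hz : a ≤ z) : Summable fun i => F i z :=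
  (hc.mul_right (exp (-δ * z))).of_norm_bounded fun i => (hf i).2 z hz

lemma tsum (hf : ∀ i, ExpDominated a δ (c i) (F i)) (hc : Summable c) :
    ExpDominated a δ (∑' i, c i) fun z => ∑' i, F i z := by
  refine ⟨Measurable.tsum fun i => (hf i).1, fun z hz => ?_⟩
  rw [← tsum_mul_right]
  exact tsum_of_norm_bounded (hc.mul_right _).hasSum fun i => (hf i).2 z hz

lemma integral_tsum (hf : ∀ i, ExpDominated a δ (c i) (F i)) (hc : Summable c)
    (hδ : 0 < δ) : ∫ z in Ioi a, ∑' i, F i z = ∑' i, ∫ z in Ioi a, F i z :=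
  (integral_tsum_of_summable_integral_norm (fun i => (hf i).integrableOn hδ) <|
    Summable.of_nonneg_of_le (fun _ => integral_nonneg fun _ => norm_nonneg _)
      (fun i => (hf i).integral_norm_le hδ) ((hc.div_const δ).mul_right _)).symm

lemma integral_integral_tsum (hf : ∀ i, ExpDominated a δ (c i) (F i)) (hc : Summable c)
    (hδ : 0 < δ) {x : ℝ} (hx : a ≤ x) :
    ∫ y in Ioi x, ∫ z in Ioi y, ∑' i, F i z = ∑' i, ∫ y in Ioi x, ∫ z in Ioi y, F i z := by
  calc ∫ y in Ioi x, ∫ z in Ioi y, ∑' i, F i z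
      = ∫ y in Ioi x, ∑' i, ∫ z in Ioi y, F i z :=
        setIntegral_congr_fun measurableSet_Ioi fun y hy =>
          integral_tsum (fun i => (hf i).mono (hx.trans (le_of_lt hy))) hc hδ
    _ = ∑' i, ∫ y in Ioi x, ∫ z in Ioi y, F i z :=
        integral_tsum (fun i => ((hf i).setIntegral_Ioi hδ).mono hx) (hc.div_const δ) hδ

end ExpDominated

section g2

variable {P : ℕ → ℝ} {θ : ℝ}

lemma le_tsum_mul_exp_neg (hP : ∀ k, 0 ≤ P k) (hMθ : Summable fun k : ℕ => P k * exp (θ * k))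
    (k : ℕ) : P k ≤ (∑' j : ℕ, P j * exp (θ * j)) * exp (-θ * k) := by
  have hk := hMθ.le_tsum k fun j _ => mul_nonneg (hP j) (exp_pos _).le
  calc P k = P k * exp (θ * k) * exp (-θ * k) := by
        rw [mul_assoc, ← exp_add, neg_mul, add_neg_cancel, exp_zero, mul_one]
    _ ≤ _ := mul_le_mul_of_nonneg_right hk (exp_pos _).le

lemma measurable_g2 (P : ℕ → ℝ) : Measurable (g2 P) :=
  measurable_neg.exp.mul (Measurable.tsum fun k => by fun_prop)

lemma g2_nonneg (hP : ∀ k, 0 ≤ P k) {z : ℝ} (hz : 0 ≤ z) : 0 ≤ g2 P z :=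
  mul_nonneg (exp_pos _).le (tsum_nonneg fun k => by have := hP (k + 2); positivity)

lemma g2_le (hP : ∀ k, 0 ≤ P k) (hθ : 0 ≤ θ) (hMθ : Summable fun k : ℕ => P k * exp (θ * k))
    {z : ℝ} (hz : 0 ≤ z) :
    g2 P z ≤ (∑' k : ℕ, P k * exp (θ * k)) * exp (-(1 - exp (-θ)) * z) := by
  set M := ∑' k : ℕ, P k * exp (θ * k)
  have hM : 0 ≤ M := tsum_nonneg fun k => mul_nonneg (hP k) (exp_pos _).le
  have hexp : HasSum (fun k : ℕ => M * ((exp (-θ) * z) ^ k / k.factorial))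
      (M * exp (exp (-θ) * z)) := by
    rw [exp_eq_exp_ℝ]; exact (NormedSpace.expSeries_div_hasSum_exp _).mul_left M
  have hterm (k : ℕ) :
      P (k + 2) * z ^ k / k.factorial ≤ M * ((exp (-θ) * z) ^ k / k.factorial) := by
    have hPk : P (k + 2) ≤ M * exp (-θ) ^ k :=
      (le_tsum_mul_exp_neg hP hMθ (k + 2)).trans <| mul_le_mul_of_nonneg_left
        (by rw [← exp_nat_mul]; exact exp_le_exp.2 (by push_cast; nlinarith)) hM
    calc P (k + 2) * z ^ k / k.factorial = P (k + 2) * (z ^ k / k.factorial) := by ring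
      _ ≤ M * exp (-θ) ^ k * (z ^ k / k.factorial) :=
        mul_le_mul_of_nonneg_right hPk (by positivity)
      _ = M * ((exp (-θ) * z) ^ k / k.factorial) := by ring
  have hsum : Summable fun k : ℕ => P (k + 2) * z ^ k / k.factorial :=
    hexp.summable.of_nonneg_of_le (fun k => by have := hP (k + 2); positivity) hterm
  calc g2 P z ≤ exp (-z) * (M * exp (exp (-θ) * z)) :=
        mul_le_mul_of_nonneg_left (hasSum_le hterm hsum.hasSum hexp) (exp_pos _).le
    _ = M * exp (-(1 - exp (-θ)) * z) := by
      rw [mul_left_comm, ← exp_add]; ring_nf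

lemma expDominated_g2 (hP : ∀ k, 0 ≤ P k) (hθ : 0 ≤ θ)
    (hMθ : Summable fun k : ℕ => P k * exp (θ * k)) :
    ∃ M, ExpDominated 0 (1 - exp (-θ)) M (g2 P) :=
  ⟨_, measurable_g2 P, fun z hz => by
    rw [norm_of_nonneg (g2_nonneg hP hz)]; exact g2_le hP hθ hMθ hz⟩

end g2

lemma summable_pow_div_factorial_sq (x : ℝ) :
    Summable fun i : ℕ => x ^ i / (i.factorial : ℝ) ^ 2 := by
  refine (Real.summable_pow_div_factorial |x|).of_norm_bounded fun i => ?_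
  have hfac : (1 : ℝ) ≤ i.factorial := by exact_mod_cast i.factorial_pos
  rw [norm_div, norm_pow, norm_pow, norm_eq_abs, Real.norm_natCast]
  exact div_le_div_of_nonneg_left (by positivity) (by positivity) (by nlinarith)

section Gfun

variable {P : ℕ → ℝ} {a δ M : ℝ}

lemma expDominated_Gfun (hg : ExpDominated a δ M (g2 P)) (hδ : 0 < δ) (i : ℕ) :
    ExpDominated a (i * δ) ((M / δ ^ 2) ^ i / (i.factorial : ℝ) ^ 2) (Gfun P i) := by
  induction i with
  | zero => exact ⟨measurable_const, fun z _ => by simp [Gfun]⟩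
  | succ i ih =>
    have hb : 0 < δ + i * δ := by positivity
    convert ((hg.mul ih).setIntegral_Ioi hb).setIntegral_Ioi hb using 1
    · push_cast; ring
    · rw [Nat.factorial_succ, pow_succ]
      push_cast
      field_simp
      ring
    · rfl

lemma expDominated_Gfun_mul_pow (hg : ExpDominated a δ M (g2 P)) (hδ : 0 < δ) (ha : 0 ≤ a)
    (r : ℝ) (i : ℕ) :
    ExpDominated a 0 ((M / δ ^ 2 * |r|) ^ i / (i.factorial : ℝ) ^ 2)
      fun z => Gfun P i z * r ^ i := by
  convert ((expDominated_Gfun hg hδ i).mono_rate ha (by positivity)).mul_const (r ^ i) using 1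
  rw [abs_pow, mul_pow]
  ring

lemma expDominated_Lfun (hg : ExpDominated a δ M (g2 P)) (hδ : 0 < δ) (ha : 0 ≤ a) (β : ℝ) :
    ∃ C, ExpDominated a 0 C (Lfun P β) :=
  ⟨_, ExpDominated.tsum (expDominated_Gfun_mul_pow hg hδ ha (-1 / β))
    (summable_pow_div_factorial_sq _)⟩

lemma Lfun_eq_one_add (hg : ExpDominated a δ M (g2 P)) (hδ : 0 < δ) (ha : 0 ≤ a) (β : ℝ)
    {x : ℝ} (hx : a ≤ x) :
    Lfun P β x = 1 + (-1 / β) * ∫ y in Ioi x, ∫ z in Ioi y, g2 P z * Lfun P β z := by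
  set r := -1 / β
  have hterm := expDominated_Gfun_mul_pow hg hδ ha r
  have hC := summable_pow_div_factorial_sq (M / δ ^ 2 * |r|)
  have hgterm (i : ℕ) : ExpDominated a δ (M * ((M / δ ^ 2 * |r|) ^ i / (i.factorial : ℝ) ^ 2))
      fun z => g2 P z * (Gfun P i z * r ^ i) := by
    simpa only [add_zero] using hg.mul (hterm i)
  calc Lfun P β x = ∑' i, Gfun P i x * r ^ i := rfl
    _ = 1 + r * ∑' i, Gfun P (i + 1) x * r ^ i := by
      rw [(ExpDominated.summable hterm hC hx).tsum_eq_zero_add, ← tsum_mul_left]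
      simp only [Gfun, pow_zero, mul_one, pow_succ, mul_left_comm r, mul_comm _ r]
    _ = 1 + r * ∑' i, ∫ y in Ioi x, ∫ z in Ioi y, g2 P z * (Gfun P i z * r ^ i) := by
      simp only [← mul_assoc, integral_mul_const]
      rfl
    _ = 1 + r * ∫ y in Ioi x, ∫ z in Ioi y, g2 P z * Lfun P β z := by
      rw [← ExpDominated.integral_integral_tsum hgterm (hC.mul_left M) hδ hx]
      simp only [tsum_mul_left]
      rfl

end Gfun

lemma integral_Ioc_integral_Ioi {h : ℝ → ℝ} {a x : ℝ} (hax : a ≤ x)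
    (hh : IntegrableOn h (Ioi a)) :
    ∫ y in Ioc a x, ∫ z in Ioi y, h z = ∫ z in Ioi a, (min x z - a) * h z := by
  -- With `Ici y` for `Ioi y`, the section at fixed `z` is `Ioc a x ∩ Iic z = Ioc a (min x z)`.
  have hinner : ∀ y ∈ Ioc a x, ∫ z in Ioi y, h z = ∫ z in Ioi a, (Ici y).indicator h z := by
    intro y hy
    rw [setIntegral_indicator measurableSet_Ici, ← integral_Ici_eq_integral_Ioi,
      inter_eq_self_of_subset_right (Ici_subset_Ioi.2 hy.1)]
  have hswap : Integrable (Function.uncurry fun y z => (Ici y).indicator h z)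
      ((volume.restrict (Ioc a x)).prod (volume.restrict (Ioi a))) := by
    have : IsFiniteMeasure (volume.restrict (Ioc a x)) := by
      rw [isFiniteMeasure_restrict]; exact measure_Ioc_lt_top.ne
    refine ((integrable_const (1 : ℝ)).mul_prod hh.norm).mono' ?_
      (ae_of_all _ fun p => ?_)
    · have hm : MeasurableSet {p : ℝ × ℝ | p.1 ≤ p.2} :=
        measurableSet_le measurable_fst measurable_snd
      exact hh.aestronglyMeasurable.comp_snd.indicator hm
    · rw [one_mul]
      exact norm_indicator_le_norm_self h p.2
  rw [setIntegral_congr_fun measurableSet_Ioc hinner, integral_integral_swap hswap]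
  refine setIntegral_congr_fun measurableSet_Ioi fun z hz => ?_
  have hind : (fun y => (Ici y).indicator h z) = (Iic z).indicator fun _ => h z := by
    ext y; by_cases hyz : y ≤ z <;> simp [indicator, hyz]
  rw [hind, setIntegral_indicator measurableSet_Iic, setIntegral_const, Ioc_inter_Iic,
    volume_real_Ioc_of_le (le_min hax (le_of_lt hz)), smul_eq_mul]

theorem stmt_11_general (P : ℕ → ℝ)
    (hPnonneg : ∀ k, 0 ≤ P k)
    (θ : ℝ) (hθ : 0 < θ)
    (hMθ : Summable fun k : ℕ => P k * Real.exp (θ * k))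
    (β₀ : ℝ) (hβ₀pos : 0 < β₀) (hL0 : Lfun P β₀ 0 = 0) :
    ∀ x : ℝ, 0 ≤ x →
      β₀ * Lfun P β₀ x = (∫ y in Ioc (0 : ℝ) x, ∫ z in Ioi y, g2 P z * Lfun P β₀ z) ∧
      β₀ * Lfun P β₀ x = ∫ z in Ioi (0 : ℝ), min x z * g2 P z * Lfun P β₀ z := by
  intro x hx
  have hδ : 0 < 1 - exp (-θ) := sub_pos.2 (exp_lt_one_iff.2 (neg_lt_zero.2 hθ))
  obtain ⟨M, hg⟩ := expDominated_g2 hPnonneg hθ.le hMθ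
  obtain ⟨C, hL⟩ := expDominated_Lfun hg hδ le_rfl β₀
  have hgL : ExpDominated 0 (1 - exp (-θ)) (M * C) fun z => g2 P z * Lfun P β₀ z := by
    simpa only [add_zero] using hg.mul hL
  set Φ := fun y => ∫ z in Ioi y, g2 P z * Lfun P β₀ z
  have hrec {x : ℝ} (hx : 0 ≤ x) : β₀ * Lfun P β₀ x = β₀ - ∫ y in Ioi x, Φ y := by
    rw [Lfun_eq_one_add hg hδ le_rfl β₀ hx]
    field_simp
    ring
  have htotal : ∫ y in Ioi 0, Φ y = β₀ := by
    have h0 := hrec le_rfl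
    rw [hL0, mul_zero] at h0
    linarith
  have hfirst : β₀ * Lfun P β₀ x = ∫ y in Ioc 0 x, Φ y := by
    rw [hrec hx, ← htotal, ← intervalIntegral.integral_of_le hx,
      intervalIntegral.integral_Ioi_sub_Ioi ((hgL.setIntegral_Ioi hδ).integrableOn hδ) hx]
  refine ⟨hfirst, hfirst.trans ?_⟩
  simpa only [sub_zero, mul_assoc] using integral_Ioc_integral_Ioi hx (hgL.integrableOn hδ)

theorem stmt_11 (P : ℕ → ℝ)
    (hP0 : P 0 = 0) (hPnonneg : ∀ k, 0 ≤ P k) (hPsum : ∑' k, P k = 1)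
    (hPmean : Summable fun k : ℕ => (k : ℝ) * P k) (hP1 : P 1 < 1)
    (θ : ℝ) (hθ : 0 < θ)
    (hMθ : Summable fun k : ℕ => P k * Real.exp (θ * k))
    (β₀ : ℝ) (hβ₀pos : 0 < β₀) (hL0 : Lfun P β₀ 0 = 0)
    (hLnn : ∀ x : ℝ, 0 ≤ x → 0 ≤ Lfun P β₀ x)
    (hLpos : ∀ β : ℝ, β₀ < β → ∀ x : ℝ, 0 ≤ x → 0 < Lfun P β x) :
    ∀ x : ℝ, 0 ≤ x →
      β₀ * Lfun P β₀ x = (∫ y in Ioc (0 : ℝ) x, ∫ z in Ioi y, g2 P z * Lfun P β₀ z) ∧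
      β₀ * Lfun P β₀ x = ∫ z in Ioi (0 : ℝ), min x z * g2 P z * Lfun P β₀ z :=
  stmt_11_general P hPnonneg θ hθ hMθ β₀ hβ₀pos hL0
end
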